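/- For every α > 1 there exist value functions with n = 2 agents and k = 2 signals that are nondecreasing in each coordinate, admit no α-deterministic conflict pair, and are not α-single crossing. Concretely, the functions v₁(1,1) = v₁(2,1) = 1/α, v₁(1,2) = v₁(2,2) = 1, v₂(1,1) = v₂(1,2) = 1/α², v₂(2,1) = 1/α, v₂(2,2) = 1 are nondecreasing in each coordinate, have no α-deterministic conflict pair, and fail the α-single crossing condition. -/

import Mathlib

/-! Agent 2's value never exceeds agent 1's, so `ρ₁ ≡ 1` and no pair can be a conflict pair,
whatever the reachability relation is. Single crossing fails when agent 1 raises her signal at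
the profile `(1,1)`: `v₁` does not move while `v₂` jumps from `1/α²` to `1/α`. -/

namespace Stmt14

/-- Performance ratio of agent 1. -/
noncomputable def rho1 (v1 v2 : Fin 2 × Fin 2 → ℝ) (s : Fin 2 × Fin 2) : ℝ :=
  v1 s / max (v1 s) (v2 s)

/-- Performance ratio of agent 2. -/
noncomputable def rho2 (v1 v2 : Fin 2 × Fin 2 → ℝ) (s : Fin 2 × Fin 2) : ℝ :=
  v2 s / max (v1 s) (v2 s)

/-- One step of the reachability relation. -/
def step (v1 v2 : Fin 2 × Fin 2 → ℝ) (p q : Fin 2 × Fin 2) : Prop :=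
  (p.2 = q.2 ∧ v1 p < v1 q) ∨ (p.1 = q.1 ∧ v2 q < v2 p)

/-- The concrete value function of agent 1: `v₁(s₁,1) = 1/α`, `v₁(s₁,2) = 1`
(signal `1` is `(0 : Fin 2)` and signal `2` is `(1 : Fin 2)`). -/
noncomputable def v1ex (α : ℝ) : Fin 2 × Fin 2 → ℝ :=
  fun p => if p.2 = 0 then α⁻¹ else 1

/-- The concrete value function of agent 2: `v₂(1,·) = 1/α²`, `v₂(2,1) = 1/α`,
`v₂(2,2) = 1`. -/
noncomputable def v2ex (α : ℝ) : Fin 2 × Fin 2 → ℝ :=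
  fun p => if p.1 = 0 then (α ^ 2)⁻¹ else if p.2 = 0 then α⁻¹ else 1

theorem monotone_fin_two_prod_of_le {β : Type*} [Preorder β] {f : Fin 2 × Fin 2 → β}
    (h₀₀₀₁ : f (0, 0) ≤ f (0, 1)) (h₁₀₁₁ : f (1, 0) ≤ f (1, 1))
    (h₀₀₁₀ : f (0, 0) ≤ f (1, 0)) (h₀₁₁₁ : f (0, 1) ≤ f (1, 1)) : Monotone f := by
  refine monotone_prod_iff.mpr ⟨fun x => ?_, fun x => ?_⟩ <;>
    rw [Fin.monotone_iff_le_succ, Fin.forall_fin_one] <;> fin_cases x <;> assumption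

theorem rho1_eq_one {v1 v2 : Fin 2 × Fin 2 → ℝ} {s : Fin 2 × Fin 2}
    (hpos : 0 < v1 s) (hle : v2 s ≤ v1 s) : rho1 v1 v2 s = 1 := by
  rw [rho1, max_eq_left hle, div_self hpos.ne']

theorem one_div_le_max_rho {v1 v2 : Fin 2 × Fin 2 → ℝ} {α : ℝ} (hα : 1 ≤ α)
    (s : Fin 2 × Fin 2) {s' : Fin 2 × Fin 2} (hpos : 0 < v1 s') (hle : v2 s' ≤ v1 s') :
    1 / α ≤ max (rho2 v1 v2 s) (rho1 v1 v2 s') := by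
  rw [rho1_eq_one hpos hle]
  exact le_max_of_le_right (div_le_one_of_le₀ hα (zero_le_one.trans hα))

section Example

variable {α : ℝ}

theorem inv_sq_lt_inv (hα : 1 < α) : (α ^ 2)⁻¹ < α⁻¹ :=
  inv_strictAnti₀ (by positivity) (lt_self_pow₀ hα one_lt_two)

theorem v1ex_pos (hα : 0 < α) (p : Fin 2 × Fin 2) : 0 < v1ex α p := by
  unfold v1ex; split_ifs <;> positivity

theorem v2ex_pos (hα : 0 < α) (p : Fin 2 × Fin 2) : 0 < v2ex α p := by
  unfold v2ex; split_ifs <;> positivity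

theorem v2ex_le_v1ex (hα : 1 < α) (p : Fin 2 × Fin 2) : v2ex α p ≤ v1ex α p := by
  have := inv_sq_lt_inv hα
  have := inv_lt_one_of_one_lt₀ hα
  unfold v1ex v2ex; split_ifs <;> linarith

theorem monotone_v1ex (hα : 1 < α) : Monotone (v1ex α) := by
  have := inv_lt_one_of_one_lt₀ hα
  exact monotone_fin_two_prod_of_le (by simpa [v1ex] using this.le)
    (by simpa [v1ex] using this.le) (by simp [v1ex]) (by simp [v1ex])

theorem monotone_v2ex (hα : 1 < α) : Monotone (v2ex α) := by
  have h₁ := inv_lt_one_of_one_lt₀ hα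
  have h₂ := inv_sq_lt_inv hα
  exact monotone_fin_two_prod_of_le (by simp [v2ex]) (by simpa [v2ex] using h₁.le)
    (by simpa [v2ex] using h₂.le) (by simpa [v2ex] using (h₂.trans h₁).le)

theorem v2ex_jump_gt (hα : 1 < α) :
    α * (v1ex α (1, 0) - v1ex α (0, 0)) < v2ex α (1, 0) - v2ex α (0, 0) := by
  simpa [v1ex, v2ex] using inv_sq_lt_inv hα

end Example

/-- for every `α > 1`, the concrete value functions above are positive,
nondecreasing in each coordinate, have no `α`-deterministic conflict pair, and fail the
`α`-single-crossing condition. -/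
theorem stmt14 (α : ℝ) (hα : 1 < α) :
    (∀ p, 0 < v1ex α p) ∧ (∀ p, 0 < v2ex α p) ∧
    Monotone (v1ex α) ∧ Monotone (v2ex α) ∧
    (∀ s s', Relation.TransGen (step (v1ex α) (v2ex α)) s s' →
      1 / α ≤ max (rho2 (v1ex α) (v2ex α) s) (rho1 (v1ex α) (v2ex α) s')) ∧
    ¬ ((∀ (s : Fin 2 × Fin 2) (t : Fin 2), s.1 ≤ t →
          v2ex α (t, s.2) - v2ex α s ≤ α * (v1ex α (t, s.2) - v1ex α s)) ∧
       (∀ (s : Fin 2 × Fin 2) (t : Fin 2), s.2 ≤ t →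
          v1ex α (s.1, t) - v1ex α s ≤ α * (v2ex α (s.1, t) - v2ex α s))) := by
  have hα₀ : 0 < α := zero_lt_one.trans hα
  refine ⟨v1ex_pos hα₀, v2ex_pos hα₀, monotone_v1ex hα, monotone_v2ex hα,
    fun s s' _ => one_div_le_max_rho hα.le s (v1ex_pos hα₀ s') (v2ex_le_v1ex hα s'), ?_⟩
  rintro ⟨hcross₁, -⟩
  exact (v2ex_jump_gt hα).not_ge (hcross₁ (0, 0) 1 (Fin.zero_le _))

end Stmt14
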